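/- Let M, N be monoids, f : Σ* → M ⋄ N a monoid homomorphism from the free monoid on an alphabet Σ into the Schützenberger product M ⋄ N = M × P_f(M×N) × N, and write f(u) = (f_M(u), f_{MN}(u), f_N(u)). Then for every word u ∈ Σ*, f_{MN}(u) = ⋃_{u = vaw, a ∈ Σ} (f_M(v)·f_{MN}(a)·f_N(w)), where for X ⊆ M×N, m·X·n = {(my, zn) : (y,z) ∈ X}, and the union ranges over all factorizations of u as v·a·w with a a single letter. -/

import Mathlib

/-- Left action of `m : M` on a finite subset of `M × N`. -/
def actL {M N : Type*} [Monoid M] [Monoid N] [DecidableEq M] [DecidableEq N]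
    (m : M) (X : Finset (M × N)) : Finset (M × N) :=
  X.image fun p => (m * p.1, p.2)

/-- Right action of `n : N` on a finite subset of `M × N`. -/
def actR {M N : Type*} [Monoid M] [Monoid N] [DecidableEq M] [DecidableEq N]
    (X : Finset (M × N)) (n : N) : Finset (M × N) :=
  X.image fun p => (p.1, p.2 * n)

/-- Schützenberger product multiplication. -/
def schMul {M N : Type*} [Monoid M] [Monoid N] [DecidableEq M] [DecidableEq N]
    (p q : M × Finset (M × N) × N) : M × Finset (M × N) × N :=
  (p.1 * q.1, actL p.1 q.2.1 ∪ actR p.2.1 q.2.2, p.2.2 * q.2.2)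

/-!
Peel off the first letter: `f (a :: t) = f [a] · f t`, so the middle component of `f (a :: t)` is
`f_M(a) · f_{MN}(t) ∪ f_{MN}(a) · f_N(t)`. The second part is the factorization with `v = []`,
and by induction the first part collects the factorizations with `v = a :: v'`. For the induction
to go through, the statement is generalized to the middle component translated on the left by an
arbitrary `m : M`.
-/

section Actions

variable {M N : Type*} [Monoid M] [Monoid N] [DecidableEq M] [DecidableEq N]

@[simp]
lemma actL_one (X : Finset (M × N)) : actL 1 X = X := by
  simp [actL]

lemma actL_actL (m m' : M) (X : Finset (M × N)) : actL m (actL m' X) = actL (m * m') X := by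
  simp [actL, Finset.image_image, Function.comp_def, mul_assoc]

lemma actL_union (m : M) (X Y : Finset (M × N)) : actL m (X ∪ Y) = actL m X ∪ actL m Y :=
  Finset.image_union X Y

lemma actL_actR (m : M) (X : Finset (M × N)) (n : N) : actL m (actR X n) = actR (actL m X) n := by
  simp [actL, actR, Finset.image_image, Function.comp_def]

end Actions

lemma List.exists_cons_eq_append_cons_iff {α : Type*} (a : α) (t : List α)
    (P : List α → α → List α → Prop) :
    (∃ v b w, a :: t = v ++ b :: w ∧ P v b w) ↔
      P [] a t ∨ ∃ v b w, t = v ++ b :: w ∧ P (a :: v) b w := by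
  simp only [List.cons_eq_append_iff]
  constructor
  · rintro ⟨v, b, w, ⟨rfl, h⟩ | ⟨v', rfl, rfl⟩, hP⟩
    · obtain ⟨rfl, rfl⟩ := List.cons.inj h
      exact Or.inl hP
    · exact Or.inr ⟨v', b, w, rfl, hP⟩
  · rintro (hP | ⟨v, b, w, rfl, hP⟩)
    · exact ⟨[], a, t, Or.inl ⟨rfl, rfl⟩, hP⟩
    · exact ⟨a :: v, b, w, Or.inr ⟨v, rfl, rfl⟩, hP⟩

section FreeMonoidHom

variable {α M N : Type*} [Monoid M] [Monoid N] [DecidableEq M] [DecidableEq N]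
  {f : List α → M × Finset (M × N) × N}

lemma apply_cons_eq_schMul (hfmul : ∀ u v : List α, f (u ++ v) = schMul (f u) (f v))
    (a : α) (t : List α) : f (a :: t) = schMul (f [a]) (f t) :=
  hfmul [a] t

lemma mem_actL_middle_iff (hf1 : f [] = (1, ∅, 1))
    (hfmul : ∀ u v : List α, f (u ++ v) = schMul (f u) (f v)) (u : List α) (m : M) (x : M × N) :
    x ∈ actL m (f u).2.1 ↔
      ∃ v a w, u = v ++ a :: w ∧ x ∈ actR (actL (m * (f v).1) (f [a]).2.1) (f w).2.2 := by
  induction u generalizing m with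
  | nil => simp [hf1, actL]
  | cons a t ih =>
    have hmiddle : actL m (f (a :: t)).2.1 =
        actL (m * (f [a]).1) (f t).2.1 ∪ actR (actL m (f [a]).2.1) (f t).2.2 := by
      rw [apply_cons_eq_schMul hfmul, schMul, actL_union, actL_actL, actL_actR]
    have hfst (v : List α) : (f (a :: v)).1 = (f [a]).1 * (f v).1 := by
      rw [apply_cons_eq_schMul hfmul, schMul]
    rw [hmiddle, Finset.mem_union, ih, List.exists_cons_eq_append_cons_iff, hf1, mul_one, or_comm]
    refine or_congr_right (exists₃_congr fun v b w => and_congr_right fun _ => ?_)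
    rw [hfst v, mul_assoc]

end FreeMonoidHom

/-- For a monoid homomorphism `f` from the free monoid `Σ*` to the
Schützenberger product `M ⋄ N`, writing `f(u) = (f_M(u), f_{MN}(u), f_N(u))`,
the middle component of `f(u)` is the union, over all factorizations
`u = v·a·w` with `a` a single letter, of `f_M(v) · f_{MN}(a) · f_N(w)`,
where `m·X·n = {(my, zn) : (y,z) ∈ X}`. -/
theorem schMul_middle_component_formula
    {α M N : Type*} [Monoid M] [Monoid N] [DecidableEq M] [DecidableEq N]
    (f : List α → M × Finset (M × N) × N)
    (hf1 : f [] = (1, ∅, 1))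
    (hfmul : ∀ u v : List α, f (u ++ v) = schMul (f u) (f v)) :
    ∀ (u : List α) (x : M × N),
      x ∈ (f u).2.1 ↔
        ∃ (v : List α) (a : α) (w : List α), u = v ++ a :: w ∧
          x ∈ actR (actL (f v).1 (f [a]).2.1) (f w).2.2 := by
  intro u x
  simpa only [actL_one, one_mul] using mem_actL_middle_iff hf1 hfmul u 1 x
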